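/- arXiv:2401.12407 — 2 statements merged into one kernel-verified Lean document; each statement's English description precedes it below -/
import Mathlib

section
/- Let A be an invertible n×n real matrix with ρ(|A^{-1}|) < 1, and let D be any diagonal matrix with diagonal entries in {-1, 0, 1}. Then A - D is invertible and |(A - D)^{-1}| ≤ (I - |A^{-1}|)^{-1} |A^{-1}| entrywise. -/
open Matrix

/-- Spectral radius of a real square matrix. -/
noncomputable def specRad {n : ℕ} (M : Matrix (Fin n) (Fin n) ℝ) : ℝ :=
  ⨆ μ : spectrum ℂ (M.map (Complex.ofReal ·)), ‖(μ : ℂ)‖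

/-- Entrywise absolute value of a matrix. -/
def absM {n : ℕ} (M : Matrix (Fin n) (Fin n) ℝ) : Matrix (Fin n) (Fin n) ℝ :=
  Matrix.of fun i j => |M i j|

open Filter
open scoped ENNReal NNReal

section Norm
attribute [local instance] Matrix.linftyOpNormedRing Matrix.linftyOpNormedAlgebra

lemma entry_norm_le {n : ℕ} (X : Matrix (Fin n) (Fin n) ℂ) (i j : Fin n) :
    ‖X i j‖ ≤ ‖X‖ := by
  have h : ‖X i j‖₊ ≤ ‖X‖₊ := by
    rw [Matrix.linfty_opNNNorm_def]
    exact le_trans (Finset.single_le_sum (f := fun k => ‖X i k‖₊) (fun k _ => zero_le)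
      (Finset.mem_univ j)) (Finset.le_sup (f := fun i => ∑ j, ‖X i j‖₊) (Finset.mem_univ i))
  exact h

lemma exists_pow_bound {n : ℕ} (M : Matrix (Fin n) (Fin n) ℝ) (h : specRad M < 1) :
    ∃ r : ℝ, 0 < r ∧ r < 1 ∧ ∀ᶠ k in atTop, ∀ i j, |(M ^ k) i j| ≤ r ^ k := by
  set Mc : Matrix (Fin n) (Fin n) ℂ := M.map (Complex.ofReal ·) with hMc
  have hspec : spectralRadius ℂ Mc < 1 := by
    have hb : BddAbove (Set.range fun μ : spectrum ℂ Mc => ‖μ.val‖) :=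
      (Set.finite_range _).bddAbove
    have key : spectralRadius ℂ Mc ≤ ENNReal.ofReal (specRad M) := by
      rw [spectralRadius]
      refine iSup₂_le fun μ hμ => ?_
      have h1 : ‖μ‖ ≤ specRad M := le_ciSup hb ⟨μ, hμ⟩
      have h2 : (‖μ‖₊ : ℝ≥0∞) = ENNReal.ofReal ‖μ‖ := by
        exact (ofReal_norm μ).symm
      rw [h2]
      exact ENNReal.ofReal_le_ofReal h1
    refine lt_of_le_of_lt key ?_
    rw [← ENNReal.ofReal_one]
    exact (ENNReal.ofReal_lt_ofReal_iff_of_nonneg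
      (Real.iSup_nonneg fun μ => norm_nonneg _)).mpr h
  obtain ⟨t, ht1, ht2⟩ := exists_between hspec
  have httop : t ≠ ⊤ := ne_top_of_lt (lt_of_lt_of_le ht2 le_top)
  have hG := spectrum.pow_nnnorm_pow_one_div_tendsto_nhds_spectralRadius Mc
  have hev : ∀ᶠ k : ℕ in atTop, (‖Mc ^ k‖₊ : ℝ≥0∞) ^ (1 / (k:ℝ)) < t :=
    hG.eventually_lt_const ht1
  set r : ℝ := max t.toReal 2⁻¹ with hr
  have hr0 : 0 < r := lt_of_lt_of_le (by norm_num) (le_max_right _ _)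
  have hr1 : r < 1 := by
    apply max_lt _ (by norm_num)
    have := ENNReal.toReal_lt_toReal httop (by norm_num : (1:ℝ≥0∞) ≠ ⊤) |>.mpr ht2
    simpa using this
  refine ⟨r, hr0, hr1, ?_⟩
  filter_upwards [hev, eventually_ge_atTop 1] with k hk hk1 i j
  have hkne : (k:ℝ) ≠ 0 := by positivity
  have h3 : (‖Mc ^ k‖₊ : ℝ≥0∞) < t ^ ((k:ℕ):ℝ) := by
    have := ENNReal.rpow_lt_rpow hk (by positivity : (0:ℝ) < (k:ℝ))
    rwa [← ENNReal.rpow_mul, one_div, inv_mul_cancel₀ hkne, ENNReal.rpow_one] at this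
  have h4 : ‖Mc ^ k‖ ≤ r ^ k := by
    have h5 : (‖Mc ^ k‖₊ : ℝ≥0∞) ≤ (ENNReal.ofReal r) ^ k := by
      refine h3.le.trans ?_
      rw [← ENNReal.rpow_natCast (ENNReal.ofReal r) k]
      refine ENNReal.rpow_le_rpow ?_ (by positivity)
      refine le_trans ?_ (ENNReal.ofReal_le_ofReal (le_max_left t.toReal 2⁻¹))
      rw [ENNReal.ofReal_toReal httop]
    have h6 := ENNReal.toReal_le_toReal (by simp)
      (by simp [ENNReal.pow_ne_top, ENNReal.ofReal_ne_top]) |>.mpr h5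
    simpa [ENNReal.toReal_pow, ENNReal.toReal_ofReal hr0.le] using h6
  have h7 : Mc ^ k = (M ^ k).map (Complex.ofReal ·) := by
    rw [hMc]
    exact (map_pow (Complex.ofRealHom.mapMatrix) M k).symm
  have h8 : |(M ^ k) i j| = ‖(Mc ^ k) i j‖ := by
    rw [h7]; simp [Matrix.map_apply, Complex.norm_real]
  rw [h8]
  exact (entry_norm_le _ i j).trans h4
end Norm

section Main
variable {n : ℕ}

lemma absLe_mul {X Y X' Y' : Matrix (Fin n) (Fin n) ℝ}
    (h1 : ∀ i j, |X i j| ≤ Y i j) (h2 : ∀ i j, |X' i j| ≤ Y' i j) :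
    ∀ i j, |(X * X') i j| ≤ (Y * Y') i j := by
  intro i j
  rw [Matrix.mul_apply, Matrix.mul_apply]
  refine (Finset.abs_sum_le_sum_abs _ _).trans (Finset.sum_le_sum fun k _ => ?_)
  rw [abs_mul]
  exact mul_le_mul (h1 i k) (h2 k j) (abs_nonneg _) ((abs_nonneg _).trans (h1 i k))

lemma absLe_pow {X Y : Matrix (Fin n) (Fin n) ℝ} (h : ∀ i j, |X i j| ≤ Y i j) :
    ∀ k : ℕ, ∀ i j, |(X ^ k) i j| ≤ (Y ^ k) i j := by
  intro k
  induction k with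
  | zero => intro i j; simp [Matrix.one_apply]; split <;> simp
  | succ m ih =>
    rw [pow_succ, pow_succ]
    exact absLe_mul ih h

lemma summable_geom_matrix {X : Matrix (Fin n) (Fin n) ℝ} {r : ℝ} (hr0 : 0 < r) (hr1 : r < 1)
    (hb : ∀ᶠ k in atTop, ∀ i j, |(X ^ k) i j| ≤ r ^ k) :
    Summable (fun k : ℕ => X ^ k) := by
  refine Pi.summable.mpr ?_
  intro i
  rw [Pi.summable]
  intro j
  refine Summable.of_norm_bounded_eventually_nat (g := fun k => r ^ k)
    (summable_geometric_of_lt_one hr0.le hr1) ?_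
  filter_upwards [hb] with k hk
  exact hk i j

lemma tendsto_pow_zero {X : Matrix (Fin n) (Fin n) ℝ} {r : ℝ} (hr0 : 0 < r) (hr1 : r < 1)
    (hb : ∀ᶠ k in atTop, ∀ i j, |(X ^ k) i j| ≤ r ^ k) :
    Tendsto (fun k : ℕ => X ^ k) atTop (nhds 0) := by
  refine tendsto_pi_nhds.mpr ?_
  intro i
  rw [tendsto_pi_nhds]
  intro j
  simp only [Pi.zero_apply, Matrix.zero_apply]
  refine squeeze_zero_norm' ?_ (tendsto_pow_atTop_nhds_zero_of_lt_one hr0.le hr1)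
  filter_upwards [hb] with k hk
  exact hk i j

lemma one_sub_mul_tsum {X : Matrix (Fin n) (Fin n) ℝ}
    (hs : Summable (fun k : ℕ => X ^ k))
    (h0 : Tendsto (fun k : ℕ => X ^ k) atTop (nhds 0)) :
    (1 - X) * (∑' k : ℕ, X ^ k) = 1 := by
  have hmap : HasSum (fun k : ℕ => (1 - X) * X ^ k) ((1 - X) * ∑' k : ℕ, X ^ k) := by
    refine hs.hasSum.map (AddMonoidHom.mulLeft (1 - X)) ?_
    exact continuous_const.matrix_mul continuous_id
  have htel : HasSum (fun k : ℕ => X ^ k - X ^ (k + 1)) ((1 - X) * ∑' k : ℕ, X ^ k) := by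
    refine hmap.congr_fun fun k => ?_
    rw [sub_mul, one_mul, ← pow_succ']
  have h1 := htel.tendsto_sum_nat
  have h2 : ∀ N, ∑ k ∈ Finset.range N, (X ^ k - X ^ (k + 1)) = 1 - X ^ N := fun N => by
    rw [Finset.sum_range_sub' (fun k => X ^ k)]; simp
  simp only [h2] at h1
  have h3 : Tendsto (fun N : ℕ => 1 - X ^ N) atTop (nhds (1 - 0)) :=
    tendsto_const_nhds.sub h0
  rw [sub_zero] at h3
  exact tendsto_nhds_unique h1 h3
end Main

theorem stmt_4 {n : ℕ} (A : Matrix (Fin n) (Fin n) ℝ) (hA : IsUnit A.det)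
    (hρ : specRad (absM A⁻¹) < 1) (d : Fin n → ℝ)
    (hd : ∀ i, d i = -1 ∨ d i = 0 ∨ d i = 1) :
    IsUnit (A - Matrix.diagonal d).det ∧
      ∀ i j, |(A - Matrix.diagonal d)⁻¹ i j| ≤ ((1 - absM A⁻¹)⁻¹ * absM A⁻¹) i j := by
  classical
  set B : Matrix (Fin n) (Fin n) ℝ := absM A⁻¹ with hB
  set C : Matrix (Fin n) (Fin n) ℝ := A⁻¹ * Matrix.diagonal d with hC
  have hBnn : ∀ i j, |A⁻¹ i j| ≤ B i j := fun i j => le_of_eq rfl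
  have hCB : ∀ i j, |C i j| ≤ B i j := by
    intro i j
    rw [hC, Matrix.mul_diagonal]
    have hdj : |d j| ≤ 1 := by rcases hd j with h | h | h <;> simp [h]
    calc |A⁻¹ i j * d j| = |A⁻¹ i j| * |d j| := abs_mul _ _
      _ ≤ B i j * 1 := mul_le_mul (hBnn i j) hdj (abs_nonneg _) ((abs_nonneg _).trans (hBnn i j))
      _ = B i j := mul_one _
  obtain ⟨r, hr0, hr1, hbnd⟩ := exists_pow_bound B hρ
  have hCbnd : ∀ᶠ k in atTop, ∀ i j, |(C ^ k) i j| ≤ r ^ k := by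
    filter_upwards [hbnd] with k hk i j
    exact (absLe_pow hCB k i j).trans ((le_abs_self _).trans (hk i j))
  have hsC := summable_geom_matrix hr0 hr1 hCbnd
  have hsB := summable_geom_matrix hr0 hr1 hbnd
  have h0C := tendsto_pow_zero hr0 hr1 hCbnd
  set S : Matrix (Fin n) (Fin n) ℝ := ∑' k : ℕ, C ^ k with hS
  set T : Matrix (Fin n) (Fin n) ℝ := ∑' k : ℕ, B ^ k with hT
  have hSinv : (1 - C) * S = 1 := one_sub_mul_tsum hsC h0C
  have hTinv : (1 - B) * T = 1 := one_sub_mul_tsum hsB (tendsto_pow_zero hr0 hr1 hbnd)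
  have hfact : A - Matrix.diagonal d = A * (1 - C) := by
    rw [hC, Matrix.mul_sub, Matrix.mul_one, ← Matrix.mul_assoc,
      Matrix.mul_nonsing_inv A hA, Matrix.one_mul]
  have hdet1 : IsUnit (1 - C).det := Matrix.isUnit_det_of_right_inverse hSinv
  constructor
  · rw [hfact, Matrix.det_mul]; exact hA.mul hdet1
  · have hinv : (A - Matrix.diagonal d)⁻¹ = S * A⁻¹ := by
      rw [hfact, Matrix.mul_inv_rev, Matrix.inv_eq_right_inv hSinv]
    have hTeq : (1 - B)⁻¹ = T := Matrix.inv_eq_right_inv hTinv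
    intro i j
    rw [hinv, hTeq]
    have h1 : HasSum (fun k : ℕ => C ^ k * A⁻¹) (S * A⁻¹) :=
      hsC.hasSum.map (AddMonoidHom.mulRight A⁻¹) (continuous_id.matrix_mul continuous_const)
    have h2 : HasSum (fun k : ℕ => B ^ k * B) (T * B) :=
      hsB.hasSum.map (AddMonoidHom.mulRight B) (continuous_id.matrix_mul continuous_const)
    have h1' : HasSum (fun k : ℕ => (C ^ k * A⁻¹) i j) ((S * A⁻¹) i j) :=
      (Pi.hasSum.mp ((Pi.hasSum.mp h1) i)) j
    have h2' : HasSum (fun k : ℕ => (B ^ k * B) i j) ((T * B) i j) :=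
      (Pi.hasSum.mp ((Pi.hasSum.mp h2) i)) j
    have hle : ∀ k : ℕ, |(C ^ k * A⁻¹) i j| ≤ (B ^ k * B) i j :=
      fun k => absLe_mul (absLe_pow hCB k) hBnn i j
    have hub : (S * A⁻¹) i j ≤ (T * B) i j :=
      hasSum_le (fun k => (le_abs_self _).trans (hle k)) h1' h2'
    have hlb : -((S * A⁻¹) i j) ≤ (T * B) i j :=
      hasSum_le (fun k => (neg_le_abs _).trans (hle k)) h1'.neg h2'
    exact abs_le.mpr ⟨neg_le.mp hlb, hub⟩
end

section
/- Let A be an invertible n×n real matrix and D a diagonal matrix with diagonal entries in {-1, 0, 1}. If ρ(|A^{-1}|) < 1, then ρ(A^{-1}D) < 1 and A - D is invertible. -/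
set_option maxHeartbeats 1000000
open Matrix Filter
open scoped NNReal ENNReal
attribute [local instance] Matrix.linftyOpNormedAddCommGroup Matrix.linftyOpNormedRing Matrix.linftyOpNormedAlgebra

lemma abs_le_specRad {n : ℕ} (M : Matrix (Fin n) (Fin n) ℝ)
    {μ : ℂ} (hμ : μ ∈ spectrum ℂ (M.map (Complex.ofReal ·))) :
    ‖μ‖ ≤ specRad M := by
  haveI : Finite (spectrum ℂ (M.map (Complex.ofReal ·))) := inferInstance
  exact le_ciSup (f := fun μ : spectrum ℂ (M.map (Complex.ofReal ·)) => ‖(μ:ℂ)‖)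
    (Set.Finite.bddAbove (Set.finite_range _)) ⟨μ, hμ⟩

lemma specRad_lt_one {n : ℕ} (M : Matrix (Fin n) (Fin n) ℝ)
    (h : ∀ μ ∈ spectrum ℂ (M.map (Complex.ofReal ·)), ‖μ‖ < 1) :
    specRad M < 1 := by
  haveI : Finite (spectrum ℂ (M.map (Complex.ofReal ·))) := inferInstance
  rcases isEmpty_or_nonempty (spectrum ℂ (M.map (Complex.ofReal ·))) with he | hne
  · rw [specRad, Real.iSup_of_isEmpty]; norm_num
  · obtain ⟨⟨μ, hμ⟩, hmax⟩ := Finite.exists_max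
      (fun x : spectrum ℂ (M.map (Complex.ofReal ·)) => ‖(x:ℂ)‖)
    exact lt_of_le_of_lt (ciSup_le hmax) (h μ hμ)

/-- Gelfand-based norm decay. -/
lemma exists_pow_norm_le {n : ℕ} (M : Matrix (Fin n) (Fin n) ℂ)
    (h : ∀ μ ∈ spectrum ℂ M, ‖μ‖ < 1) :
    ∃ r : ℝ, 0 ≤ r ∧ r < 1 ∧ ∀ᶠ k in atTop, ‖M ^ k‖ ≤ r ^ k := by
  have hsr : spectralRadius ℂ M < 1 := by
    rw [spectralRadius]
    rcases (Matrix.finite_spectrum M).toFinset.eq_empty_or_nonempty with hemp | hne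
    · have : spectrum ℂ M = ∅ := by
        simpa [Set.Finite.toFinset_eq_empty] using hemp
      simp [this]
    · set s := (Matrix.finite_spectrum M).toFinset with hs
      have hlt : s.sup' hne (fun μ => (‖μ‖₊ : ℝ≥0)) < 1 := by
        rw [Finset.sup'_lt_iff]
        intro μ hμ
        have : μ ∈ spectrum ℂ M := ((Matrix.finite_spectrum M).mem_toFinset).mp hμ
        have := h μ this
        rw [← NNReal.coe_lt_coe]
        simpa using this
      refine lt_of_le_of_lt (b := ((s.sup' hne fun μ => ‖μ‖₊ : ℝ≥0) : ℝ≥0∞)) (iSup₂_le fun μ hμ => ?_) ?_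
      · exact_mod_cast ENNReal.coe_le_coe.mpr
          (Finset.le_sup' (fun μ => (‖μ‖₊ : ℝ≥0)) (((Matrix.finite_spectrum M).mem_toFinset).mpr hμ))
      · exact_mod_cast hlt
  obtain ⟨r, hr1, hr2⟩ := ENNReal.lt_iff_exists_nnreal_btwn.mp hsr
  refine ⟨r, r.coe_nonneg, by exact_mod_cast hr2, ?_⟩
  have hg := spectrum.pow_nnnorm_pow_one_div_tendsto_nhds_spectralRadius M
  have hev : ∀ᶠ k : ℕ in atTop, (‖M ^ k‖₊ : ENNReal) ^ (1 / k : ℝ) < r :=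
    hg.eventually_lt_const hr1
  filter_upwards [hev, eventually_ge_atTop 1] with k hk hk1
  have hk0 : (k : ℝ) ≠ 0 := by positivity
  have := ENNReal.rpow_le_rpow hk.le (by positivity : (0:ℝ) ≤ (k:ℝ))
  rw [← ENNReal.rpow_mul, one_div_mul_cancel hk0, ENNReal.rpow_one,
    ENNReal.rpow_natCast] at this
  rw [← ENNReal.coe_pow] at this
  have h2 : ‖M ^ k‖₊ ≤ r ^ k := ENNReal.coe_le_coe.mp this
  calc ‖M ^ k‖ = ((‖M ^ k‖₊ : ℝ≥0) : ℝ) := rfl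
    _ ≤ ((r ^ k : ℝ≥0) : ℝ) := by exact_mod_cast h2
    _ = (r:ℝ) ^ k := by push_cast; ring

-- entrywise nonneg powers
lemma pow_entry_nonneg {n : ℕ} {Y : Matrix (Fin n) (Fin n) ℝ} (hY : ∀ i j, 0 ≤ Y i j)
    (k : ℕ) : ∀ i j, 0 ≤ (Y ^ k) i j := by
  induction k with
  | zero => intro i j; by_cases h : i = j <;> simp [pow_zero, Matrix.one_apply, h]
  | succ k ih =>
    intro i j
    rw [pow_succ, Matrix.mul_apply]
    exact Finset.sum_nonneg fun l _ => mul_nonneg (ih i l) (hY l j)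

lemma map_pow_ofReal {n : ℕ} (Y : Matrix (Fin n) (Fin n) ℝ) (k : ℕ) :
    (Y.map (Complex.ofReal ·)) ^ k = (Y ^ k).map (Complex.ofReal ·) := by
  have h : ∀ Z : Matrix (Fin n) (Fin n) ℝ, Z.map (Complex.ofReal ·) = Complex.ofRealHom.mapMatrix Z :=
    fun _ => rfl
  rw [h, h, ← map_pow]

lemma eig_abs_lt_one {n : ℕ} (X Y : Matrix (Fin n) (Fin n) ℝ)
    (hY : ∀ i j, 0 ≤ Y i j) (hXY : ∀ i j, |X i j| ≤ Y i j)
    (hρ : specRad Y < 1) {μ : ℂ}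
    (hμ : μ ∈ spectrum ℂ (X.map (Complex.ofReal ·))) : ‖μ‖ < 1 := by
  set X' := X.map (Complex.ofReal ·) with hX'
  have hnu := spectrum.mem_iff.mp hμ
  have hdet : (algebraMap ℂ (Matrix (Fin n) (Fin n) ℂ) μ - X').det = 0 := by
    by_contra hne
    exact hnu ((Matrix.isUnit_iff_isUnit_det _).mpr (isUnit_iff_ne_zero.mpr hne))
  obtain ⟨v, hv0, hv⟩ := (Matrix.exists_mulVec_eq_zero_iff).mpr hdet
  have hXv : X' *ᵥ v = μ • v := by
    have h1 : (algebraMap ℂ (Matrix (Fin n) (Fin n) ℂ) μ - X') *ᵥ v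
        = μ • v - X' *ᵥ v := by
      rw [Matrix.sub_mulVec, Algebra.algebraMap_eq_smul_one, Matrix.smul_mulVec,
        Matrix.one_mulVec]
    rw [h1] at hv
    exact (sub_eq_zero.mp hv).symm
  set w : Fin n → ℝ := fun i => ‖v i‖ with hw
  set c := ‖μ‖ with hc
  have hwnn : ∀ i, 0 ≤ w i := fun i => norm_nonneg _
  have hkey : ∀ i, c * w i ≤ (Y *ᵥ w) i := by
    intro i
    have : c * w i = ‖(X' *ᵥ v) i‖ := by
      rw [hXv]; simp [hw, hc, _root_.map_mul]
    rw [this]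
    calc ‖(X' *ᵥ v) i‖
        = ‖∑ j, X' i j * v j‖ := by simp [Matrix.mulVec, dotProduct]
      _ ≤ ∑ j, ‖X' i j * v j‖ := norm_sum_le _ _
      _ ≤ ∑ j, Y i j * w j := by
          refine Finset.sum_le_sum fun j _ => ?_
          rw [norm_mul]
          refine mul_le_mul_of_nonneg_right ?_ (hwnn j)
          simpa [hX', Complex.norm_real, Real.norm_eq_abs] using hXY i j
      _ = (Y *ᵥ w) i := by simp [Matrix.mulVec, dotProduct]
  have hiter : ∀ k : ℕ, ∀ i, c ^ k * w i ≤ ((Y ^ k) *ᵥ w) i := by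
    intro k
    induction k with
    | zero => intro i; simp [Matrix.one_mulVec]
    | succ k ih =>
      intro i
      have hYk := pow_entry_nonneg hY k
      calc c ^ (k+1) * w i = c * (c ^ k * w i) := by ring
        _ ≤ c * ((Y ^ k *ᵥ w) i) := mul_le_mul_of_nonneg_left (ih i) (norm_nonneg μ)
        _ = ∑ j, (Y ^ k) i j * (c * w j) := by
            simp [Matrix.mulVec, dotProduct, Finset.mul_sum, mul_comm, mul_left_comm]
        _ ≤ ∑ j, (Y ^ k) i j * ((Y *ᵥ w) j) :=
            Finset.sum_le_sum fun j _ => mul_le_mul_of_nonneg_left (hkey j) (hYk i j)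
        _ = ((Y ^ (k+1)) *ᵥ w) i := by
            rw [pow_succ, ← Matrix.mulVec_mulVec]
            simp [Matrix.mulVec, dotProduct]
  obtain ⟨i0, hi0⟩ := Function.ne_iff.mp hv0
  have hwi0 : 0 < w i0 := by
    have : v i0 ≠ 0 := by simpa using hi0
    simpa [hw] using norm_pos_iff.mpr this
  set B := ∑ j, w j with hBdef
  have hB : ∀ j, w j ≤ B := fun j => Finset.single_le_sum (fun j _ => hwnn j) (Finset.mem_univ j)
  have hBnn : 0 ≤ B := Finset.sum_nonneg fun j _ => hwnn j
  have hall : ∀ μ' ∈ spectrum ℂ (Y.map (Complex.ofReal ·)), ‖μ'‖ < 1 :=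
    fun μ' hμ' => lt_of_le_of_lt (abs_le_specRad Y hμ') hρ
  obtain ⟨r, hr0, hr1, hev⟩ := exists_pow_norm_le _ hall
  by_contra hcon
  push_neg at hcon
  have h1 : ∀ᶠ k : ℕ in atTop, w i0 ≤ r ^ k * B := by
    filter_upwards [hev] with k hk
    have hwle : w i0 ≤ c ^ k * w i0 :=
      le_mul_of_one_le_left (hwnn i0) (one_le_pow₀ hcon)
    have h2 : ((Y ^ k) *ᵥ w) i0 ≤ (∑ j, (Y ^ k) i0 j) * B := by
      rw [Finset.sum_mul]
      simp only [Matrix.mulVec, dotProduct]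
      exact Finset.sum_le_sum fun j _ =>
        mul_le_mul_of_nonneg_left (hB j) (pow_entry_nonneg hY k i0 j)
    have h3 : (∑ j, (Y ^ k) i0 j) ≤ ‖(Y.map (Complex.ofReal ·)) ^ k‖ := by
      rw [map_pow_ofReal]
      have hrow : (∑ j, ‖((Y ^ k).map (Complex.ofReal ·)) i0 j‖₊)
          ≤ ‖(Y ^ k).map (Complex.ofReal ·)‖₊ := by
        rw [Matrix.linfty_opNNNorm_def]
        exact Finset.le_sup (f := fun i => ∑ j, ‖((Y ^ k).map (Complex.ofReal ·)) i j‖₊)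
          (Finset.mem_univ i0)
      have hrow' := NNReal.coe_le_coe.mpr hrow
      calc ∑ j, (Y ^ k) i0 j = ∑ j, ‖((Y ^ k).map (Complex.ofReal ·)) i0 j‖ := by
            refine Finset.sum_congr rfl fun j _ => ?_
            simp [Matrix.map_apply, Complex.norm_real, Real.norm_eq_abs,
              abs_of_nonneg (pow_entry_nonneg hY k i0 j)]
        _ ≤ ‖(Y ^ k).map (Complex.ofReal ·)‖ := by
            simpa [coe_nnnorm, NNReal.coe_sum] using hrow'
    calc w i0 ≤ c ^ k * w i0 := hwle
      _ ≤ ((Y ^ k) *ᵥ w) i0 := hiter k i0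
      _ ≤ (∑ j, (Y ^ k) i0 j) * B := h2
      _ ≤ ‖(Y.map (Complex.ofReal ·)) ^ k‖ * B := mul_le_mul_of_nonneg_right h3 hBnn
      _ ≤ r ^ k * B := mul_le_mul_of_nonneg_right hk hBnn
  have hten : Tendsto (fun k : ℕ => r ^ k * B) atTop (nhds 0) := by
    simpa using (tendsto_pow_atTop_nhds_zero_of_lt_one hr0 hr1).mul_const B
  have hfin : w i0 ≤ 0 := ge_of_tendsto hten h1
  linarith

theorem stmt_17 {n : ℕ} (A : Matrix (Fin n) (Fin n) ℝ) (hA : IsUnit A.det)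
    (d : Fin n → ℝ) (hd : ∀ i, d i = -1 ∨ d i = 0 ∨ d i = 1)
    (hρ : specRad (Matrix.of fun i j => |A⁻¹ i j|) < 1) :
    specRad (A⁻¹ * Matrix.diagonal d) < 1 ∧ IsUnit (A - Matrix.diagonal d).det := by
  set D := Matrix.diagonal d with hD
  set X := A⁻¹ * D with hX
  set Y := (Matrix.of fun i j => |A⁻¹ i j| : Matrix (Fin n) (Fin n) ℝ) with hY
  have hYnn : ∀ i j, 0 ≤ Y i j := fun i j => abs_nonneg _
  have hd1 : ∀ j, |d j| ≤ 1 := by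
    intro j; rcases hd j with h | h | h <;> simp [h]
  have hXY : ∀ i j, |X i j| ≤ Y i j := by
    intro i j
    have hXe : X i j = A⁻¹ i j * d j := by
      rw [hX, hD]; exact Matrix.mul_diagonal _ _ _ _
    rw [hXe, abs_mul]
    calc |A⁻¹ i j| * |d j| ≤ |A⁻¹ i j| * 1 :=
          mul_le_mul_of_nonneg_left (hd1 j) (abs_nonneg _)
      _ = Y i j := by simp [hY]
  have hlt : ∀ μ ∈ spectrum ℂ (X.map (Complex.ofReal ·)), ‖μ‖ < 1 :=
    fun μ hμ => eig_abs_lt_one X Y hYnn hXY hρ hμ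
  refine ⟨specRad_lt_one X hlt, ?_⟩
  have hsub : A - D = A * (1 - X) := by
    rw [Matrix.mul_sub, Matrix.mul_one, hX, ← Matrix.mul_assoc,
      Matrix.mul_nonsing_inv A hA, Matrix.one_mul]
  rw [hsub, Matrix.det_mul]
  refine hA.mul ?_
  rw [isUnit_iff_ne_zero]
  intro h0
  have h1 : (1 : ℂ) ∈ spectrum ℂ (X.map (Complex.ofReal ·)) := by
    rw [spectrum.mem_iff]
    intro hu
    have hdet := (Matrix.isUnit_iff_isUnit_det _).mp hu
    have hmap : ∀ Z : Matrix (Fin n) (Fin n) ℝ,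
        Z.map (Complex.ofReal ·) = Complex.ofRealHom.mapMatrix Z := fun _ => rfl
    have heq : (algebraMap ℂ (Matrix (Fin n) (Fin n) ℂ) 1 - X.map (Complex.ofReal ·))
        = Complex.ofRealHom.mapMatrix (1 - X) := by
      simp only [hmap, _root_.map_sub, _root_.map_one]
    rw [heq, ← RingHom.map_det, h0] at hdet
    simp at hdet
  have := hlt 1 h1
  simp at this
end
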